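/- Let |a| > 1 and set z_1 = -a - sqrt(a²-1), z_2 = -a + sqrt(a²-1). Then for all positive integers k_1, k_2, if a < -1, (1/2π) ∫_0^{2π} sin(k_1 x) sin(k_2 x) / (a + cos x) dx = (z_1^{|k_1 - k_2|} - z_1^{k_1+k_2}) / (z_1 - z_2). -/

import Mathlib

set_option maxHeartbeats 1000000
open Real intervalIntegral

lemma basic (a : ℝ) (ha : a < -1) :
    0 < Real.sqrt (a^2-1) ∧ Real.sqrt (a^2-1) ^ 2 = a^2 - 1 ∧
    0 < -a - Real.sqrt (a^2-1) ∧ -a - Real.sqrt (a^2-1) < 1 := by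
  have h1 : (0:ℝ) < a^2 - 1 := by nlinarith
  have hs2 : Real.sqrt (a^2-1) ^ 2 = a^2 - 1 := Real.sq_sqrt h1.le
  have hs : 0 < Real.sqrt (a^2-1) := Real.sqrt_pos.mpr h1
  refine ⟨hs, hs2, by nlinarith, by nlinarith⟩

lemma derivF (a : ℝ) (ha : a < -1) (x : ℝ) :
    HasDerivAt (fun x => -(x + 2 * Real.arctan ((-a - Real.sqrt (a^2-1)) * Real.sin x /
        (1 - (-a - Real.sqrt (a^2-1)) * Real.cos x))) / Real.sqrt (a^2-1))
      (1 / (a + Real.cos x)) x := by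
  obtain ⟨hs, hs2, hz0, hz1⟩ := basic a ha
  set s := Real.sqrt (a^2-1) with hsdef
  set z := -a - s with hzdef
  have hw : 1 - z * Real.cos x ≠ 0 := by
    have := Real.neg_one_le_cos x; have := Real.cos_le_one x; nlinarith
  have hu : HasDerivAt (fun x => z * Real.sin x / (1 - z * Real.cos x))
      ((z * Real.cos x * (1 - z * Real.cos x) - z * Real.sin x * (z * Real.sin x)) /
        (1 - z * Real.cos x)^2) x := by
    have h1 : HasDerivAt (fun x => z * Real.sin x) (z * Real.cos x) x :=
      (Real.hasDerivAt_sin x).const_mul z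
    have h2 : HasDerivAt (fun x => 1 - z * Real.cos x) (z * Real.sin x) x := by
      have := ((Real.hasDerivAt_cos x).const_mul z).const_sub 1
      simpa using this.congr_deriv (by ring)
    exact h1.div h2 hw
  have H := (((hasDerivAt_id x).add ((hu.arctan).const_mul 2)).neg).div_const s
  refine H.congr_deriv (Eq.symm ?_)
  have hden : a + Real.cos x < 0 := by have := Real.cos_le_one x; nlinarith
  have hsin : Real.sin x ^ 2 = 1 - Real.cos x ^ 2 := by
    have := Real.sin_sq_add_cos_sq x; nlinarith
  have hq : 1 + (z * Real.sin x / (1 - z * Real.cos x))^2 =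
      (1 + z^2 - 2*z*Real.cos x) / (1 - z * Real.cos x)^2 := by
    field_simp
    nlinarith [sq_nonneg (1 - z * Real.cos x)]
  rw [hq]
  have hpos : 1 + z^2 - 2*z*Real.cos x > 0 := by
    have := Real.neg_one_le_cos x; have := Real.cos_le_one x; nlinarith
  have hne : a + Real.cos x ≠ 0 := hden.ne
  have hkey : z^2 + 2*a*z + 1 = 0 := by rw [hzdef]; nlinarith
  have h1z : 1 - z^2 = 2*z*s := by rw [hzdef]; nlinarith
  have hD : 1 + z ^ 2 - Real.cos x * 2 * z ≠ 0 := by nlinarith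
  have hw' : 1 - Real.cos x * z ≠ 0 := by rw [mul_comm]; exact hw
  field_simp [hne, hpos.ne', hw, hs.ne', hD, hw']
  linear_combination s * hkey + (a+Real.cos x) * h1z - (2*z^2*(a+Real.cos x)) * hsin
open Real intervalIntegral

section
variable (a : ℝ)

lemma contQ (ha : a < -1) (f : ℝ → ℝ) (hf : Continuous f) :
    Continuous fun x => f x / (a + Real.cos x) := by
  apply hf.div (continuous_const.add Real.continuous_cos)
  intro x
  have := Real.cos_le_one x; intro h; simp only [Pi.add_apply] at h; nlinarith

lemma J0 (ha : a < -1) :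
    ∫ x in (0:ℝ)..(2*π), 1 / (a + Real.cos x) = -2*π / Real.sqrt (a^2-1) := by
  obtain ⟨hs, hs2, hz0, hz1⟩ := basic a ha
  rw [intervalIntegral.integral_eq_sub_of_hasDerivAt (fun x _ => derivF a ha x)
      ((contQ a ha 1 continuous_const).intervalIntegrable 0 (2*π))]
  simp [Real.sin_two_pi]

lemma Icosn (n : ℕ) (hn : 0 < n) :
    ∫ x in (0:ℝ)..(2*π), Real.cos (n*x) = 0 := by
  have hne : (n:ℝ) ≠ 0 := Nat.cast_ne_zero.mpr hn.ne'
  have hd : ∀ x : ℝ, HasDerivAt (fun x => Real.sin ((n:ℝ)*x) / n) (Real.cos ((n:ℝ)*x)) x := by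
    intro x
    have h := ((Real.hasDerivAt_sin ((n:ℝ)*x)).comp x ((hasDerivAt_id x).const_mul (n:ℝ))).div_const (n:ℝ)
    refine h.congr_deriv (Eq.symm ?_)
    simp [hne]
  rw [intervalIntegral.integral_eq_sub_of_hasDerivAt (fun x _ => hd x)
      ((Real.continuous_cos.comp (continuous_const.mul continuous_id)).intervalIntegrable 0 (2*π))]
  have h2 : Real.sin ((n:ℝ)*(2*π)) = 0 := by
    have h3 : (n:ℝ)*(2*π) = ((2*n:ℕ):ℝ)*π := by push_cast; ring
    rw [h3]; exact Real.sin_nat_mul_pi _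
  simp [h2]

lemma Jn (ha : a < -1) (n : ℕ) :
    ∫ x in (0:ℝ)..(2*π), Real.cos (n*x) / (a + Real.cos x)
      = -2*π * (-a - Real.sqrt (a^2-1))^n / Real.sqrt (a^2-1) := by
  obtain ⟨hs, hs2, hz0, hz1⟩ := basic a ha
  set s := Real.sqrt (a^2-1) with hsdef
  set z := -a - s with hzdef
  have hkey : z^2 + 2*a*z + 1 = 0 := by rw [hzdef]; nlinarith
  have hne : ∀ x : ℝ, a + Real.cos x ≠ 0 := by
    intro x; have := Real.cos_le_one x; intro h; nlinarith
  have hint : ∀ m : ℕ, IntervalIntegrable (fun x => Real.cos (m*x) / (a + Real.cos x))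
      MeasureTheory.volume 0 (2*π) := fun m =>
    (contQ a ha _ (Real.continuous_cos.comp (continuous_const.mul continuous_id))).intervalIntegrable 0 (2*π)
  have hJ0 : ∫ x in (0:ℝ)..(2*π), Real.cos ((0:ℕ)*x) / (a + Real.cos x) = -2*π*z^0/s := by
    simpa using J0 a ha
  have hJ1 : ∫ x in (0:ℝ)..(2*π), Real.cos ((1:ℕ)*x) / (a + Real.cos x) = -2*π*z^1/s := by
    have hpt : ∀ x : ℝ, Real.cos ((1:ℕ)*x) / (a + Real.cos x)
        = 1 - a * (1 / (a + Real.cos x)) := by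
      intro x; have := hne x; field_simp; simp
    simp only [hpt]
    have iQ : IntervalIntegrable (fun x => 1 / (a + Real.cos x)) MeasureTheory.volume 0 (2*π) :=
      (contQ a ha _ continuous_const).intervalIntegrable 0 (2*π)
    rw [intervalIntegral.integral_sub (intervalIntegrable_const) (iQ.const_mul a),
      intervalIntegral.integral_const_mul, J0 a ha]
    simp only [intervalIntegral.integral_const, smul_eq_mul, mul_one]
    rw [hzdef, ← hsdef]
    field_simp
    ring
  -- recurrence
  have hstep : ∀ m : ℕ,
      (∫ x in (0:ℝ)..(2*π), Real.cos (m*x) / (a + Real.cos x)) = -2*π*z^m/s →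
      (∫ x in (0:ℝ)..(2*π), Real.cos ((m+1:ℕ)*x) / (a + Real.cos x)) = -2*π*z^(m+1)/s →
      (∫ x in (0:ℝ)..(2*π), Real.cos ((m+2:ℕ)*x) / (a + Real.cos x)) = -2*π*z^(m+2)/s := by
    intro m ih0 ih1
    have hpt : ∀ x : ℝ, Real.cos ((m+2:ℕ)*x) / (a + Real.cos x)
        = (2*Real.cos ((m+1:ℕ)*x) - 2*a*(Real.cos ((m+1:ℕ)*x) / (a + Real.cos x)))
          - Real.cos (m*x) / (a + Real.cos x) := by
      intro x
      have h := hne x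
      have e1 : ((m:ℝ)+2)*x = ((m:ℝ)+1)*x + x := by ring
      have e2 : (m:ℝ)*x = ((m:ℝ)+1)*x - x := by ring
      push_cast
      rw [e1, e2, Real.cos_add, Real.cos_sub]
      field_simp
      ring
    simp only [hpt]
    have i1 : IntervalIntegrable (fun x => 2*Real.cos ((m+1:ℕ)*x)) MeasureTheory.volume 0 (2*π) :=
      (continuous_const.mul (Real.continuous_cos.comp (continuous_const.mul continuous_id))).intervalIntegrable 0 (2*π)
    rw [intervalIntegral.integral_sub (i1.sub ((hint (m+1)).const_mul (2*a))) (hint m),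
      intervalIntegral.integral_sub i1 ((hint (m+1)).const_mul (2*a)),
      intervalIntegral.integral_const_mul, intervalIntegral.integral_const_mul,
      Icosn (m+1) (Nat.succ_pos m), ih0, ih1]
    have hz2 : z^(m+2) = -(2*a)*z^(m+1) - z^m := by linear_combination z^m * hkey
    rw [hz2]
    field_simp
    ring
  -- two-step induction
  have main : ∀ m : ℕ,
      ((∫ x in (0:ℝ)..(2*π), Real.cos (m*x) / (a + Real.cos x)) = -2*π*z^m/s) ∧
      ((∫ x in (0:ℝ)..(2*π), Real.cos ((m+1:ℕ)*x) / (a + Real.cos x)) = -2*π*z^(m+1)/s) := by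
    intro m
    induction m with
    | zero => exact ⟨hJ0, hJ1⟩
    | succ k ih => exact ⟨ih.2, hstep k ih.1 ih.2⟩
  exact (main n).1
end

/-- For `a < -1`, with `z₁ = -a - √(a²-1)` and `z₂ = -a + √(a²-1)`,
`(1/2π) ∫_0^{2π} sin(k₁x) sin(k₂x)/(a + cos x) dx = (z₁^{|k₁-k₂|} - z₁^{k₁+k₂})/(z₁ - z₂)`. -/
theorem stmt_3 (a : ℝ) (ha : a < -1) (k₁ k₂ : ℕ) (hk₁ : 0 < k₁) (hk₂ : 0 < k₂) :
    (1 / (2 * π)) * ∫ x in (0:ℝ)..(2 * π),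
        Real.sin (k₁ * x) * Real.sin (k₂ * x) / (a + Real.cos x)
      = ((-a - Real.sqrt (a ^ 2 - 1)) ^ (Nat.dist k₁ k₂)
          - (-a - Real.sqrt (a ^ 2 - 1)) ^ (k₁ + k₂))
        / ((-a - Real.sqrt (a ^ 2 - 1)) - (-a + Real.sqrt (a ^ 2 - 1))) := by
  obtain ⟨hs, hs2, hz0, hz1⟩ := basic a ha
  set s := Real.sqrt (a^2-1) with hsdef
  set z := -a - s with hzdef
  clear_value s z
  have hne : ∀ x : ℝ, a + Real.cos x ≠ 0 := by
    intro x; have := Real.cos_le_one x; intro h; nlinarith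
  have hint : ∀ m : ℕ, IntervalIntegrable (fun x => Real.cos (m*x) / (a + Real.cos x))
      MeasureTheory.volume 0 (2*π) := fun m =>
    (contQ a ha _ (Real.continuous_cos.comp (continuous_const.mul continuous_id))).intervalIntegrable 0 (2*π)
  have hdist : ∀ x : ℝ, Real.cos ((Nat.dist k₁ k₂ : ℝ) * x)
      = Real.cos ((k₁:ℝ)*x - (k₂:ℝ)*x) := by
    intro x
    rcases le_total k₁ k₂ with h | h
    · rw [Nat.dist_eq_sub_of_le h, Nat.cast_sub h]
      rw [show ((k₂:ℝ) - k₁)*x = -((k₁:ℝ)*x - (k₂:ℝ)*x) by ring, Real.cos_neg]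
    · rw [Nat.dist_eq_sub_of_le_right h, Nat.cast_sub h]
      ring_nf
  have hpt : ∀ x : ℝ, Real.sin (k₁ * x) * Real.sin (k₂ * x) / (a + Real.cos x)
      = (1/2)*(Real.cos ((Nat.dist k₁ k₂ : ℝ)*x) / (a + Real.cos x))
        - (1/2)*(Real.cos (((k₁+k₂ : ℕ):ℝ)*x) / (a + Real.cos x)) := by
    intro x
    have h := hne x
    rw [hdist x, show (((k₁+k₂:ℕ)):ℝ)*x = (k₁:ℝ)*x + (k₂:ℝ)*x by push_cast; ring,
      Real.cos_sub, Real.cos_add]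
    field_simp
    ring
  simp only [hpt]
  rw [intervalIntegral.integral_sub ((hint (Nat.dist k₁ k₂)).const_mul (1/2))
      ((hint (k₁+k₂)).const_mul (1/2)),
    intervalIntegral.integral_const_mul, intervalIntegral.integral_const_mul,
    Jn a ha (Nat.dist k₁ k₂), Jn a ha (k₁+k₂)]
  have hπ : π ≠ 0 := Real.pi_ne_zero
  rw [show (a^2-1 : ℝ) = a^2-1 from rfl, ← hsdef, ← hzdef]
  rw [show z - (-a + s) = -(2*s) by rw [hzdef]; ring]
  rw [div_neg]
  field_simp
  ring
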